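/- Let n ≥ 2 and let Ψ = Ψ_{φ,Q,P} be a type (I) endomorphism of ℤ^m × F_n given by (a, u) ↦ (aQ + ūP, φ(u)). Then Ψ is injective if and only if φ is injective and det(Q) ≠ 0. -/

import Mathlib

/-!
The kernel of `Ψ` consists of the pairs `(a, u)` with `φ u = 1` and `a Q = -ū P`. A nonzero
`a` with `a Q = 0` gives the kernel element `(a, 1)`. If `φ u = 1`, then each commutator
`⁅u, x⁆` lies in `ker φ` and has trivial abelianization, so `(0, ⁅u, x⁆)` lies in the
kernel. So if `Ψ` is injective then `u` is central, and the centre of `F_n`, `n ≥ 2`, is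
trivial: by Nielsen–Schreier, commuting elements generate a free abelian, hence cyclic,
subgroup, and a basis element of `F_n` is not a proper power.
-/

open Matrix

namespace Stmt13

def abv {n : ℕ} (u : FreeGroup (Fin n)) : Fin n → ℤ :=
  Multiplicative.toAdd ((FreeGroup.lift fun i => Multiplicative.ofAdd (Pi.single i 1)) u)

abbrev GG (m n : ℕ) := Multiplicative (Fin m → ℤ) × FreeGroup (Fin n)

end Stmt13

namespace IsFreeGroup

variable {G : Type*} [Group G] [IsFreeGroup G]

instance subsingleton_generators_of_isMulCommutative [IsMulCommutative G] :
    Subsingleton (Generators G) := by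
  classical
  refine ⟨fun i j => by_contra fun hij => ?_⟩
  let f : G →* FreeGroup Bool := lift fun x => FreeGroup.of (decide (x = i))
  have hcomm := congrArg f (mul_comm' (of i) (of j))
  simp only [map_mul, f, lift_of, decide_true, Ne.symm hij, decide_false] at hcomm
  exact absurd hcomm (by decide)

theorem isCyclic_of_isMulCommutative [IsMulCommutative G] : IsCyclic G := by
  rw [(toFreeGroup G).isCyclic]
  cases isEmpty_or_nonempty (Generators G)
  · exact isCyclic_of_subsingleton
  · have := uniqueOfSubsingleton (Classical.arbitrary (Generators G))
    infer_instance

end IsFreeGroup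

theorem FreeGroup.exists_mem_zpowers_of_commute {α : Type*} {a b : FreeGroup α}
    (h : Commute a b) : ∃ t, a ∈ Subgroup.zpowers t ∧ b ∈ Subgroup.zpowers t := by
  let H := Subgroup.closure {a, b}
  have : IsMulCommutative H := Subgroup.isMulCommutative_closure <| by
    rintro x (rfl | rfl) y (rfl | rfl)
    exacts [rfl, h.eq, h.symm.eq, rfl]
  obtain ⟨t, ht⟩ := IsFreeGroup.isCyclic_of_isMulCommutative (G := H) |>.exists_generator
  have hmem : ∀ x (hx : x ∈ H), x ∈ Subgroup.zpowers (t : FreeGroup α) := fun x hx => by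
    obtain ⟨k, hk⟩ := ht ⟨x, hx⟩
    exact ⟨k, congrArg Subtype.val hk⟩
  exact ⟨t, hmem a (Subgroup.subset_closure (by simp)),
    hmem b (Subgroup.subset_closure (by simp))⟩

namespace Stmt13

open scoped commutatorElement

section Abelianization

variable {n : ℕ}

@[simp]
lemma abv_of (i : Fin n) : abv (FreeGroup.of i) = Pi.single i 1 := by simp [abv]

@[simp]
lemma abv_one : abv (1 : FreeGroup (Fin n)) = 0 := by simp [abv]

@[simp]
lemma abv_mul (u v : FreeGroup (Fin n)) : abv (u * v) = abv u + abv v := by simp [abv]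

@[simp]
lemma abv_inv (u : FreeGroup (Fin n)) : abv u⁻¹ = -abv u := by simp [abv]

@[simp]
lemma abv_zpow (u : FreeGroup (Fin n)) (k : ℤ) : abv (u ^ k) = k • abv u := by simp [abv]

lemma abv_commutatorElement (u v : FreeGroup (Fin n)) : abv ⁅u, v⁆ = 0 := by
  simp only [commutatorElement_def, abv_mul, abv_inv]
  abel

lemma mem_zpowers_of_commute_of {u : FreeGroup (Fin n)} {i : Fin n}
    (h : Commute u (FreeGroup.of i)) : u ∈ Subgroup.zpowers (FreeGroup.of i) := by
  obtain ⟨t, ⟨k, rfl⟩, j, hj⟩ := FreeGroup.exists_mem_zpowers_of_commute h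
  have hj1 : j * abv t i = 1 := by simpa using congrFun (congrArg abv hj) i
  have ht : t = FreeGroup.of i ^ j := by
    rcases Int.eq_one_or_neg_one_of_mul_eq_one hj1 with rfl | rfl
    · simpa using hj
    · simp [← hj]
  exact ⟨j * k, by simp [ht, _root_.zpow_mul]⟩

lemma eq_one_of_commute_of_commute {u : FreeGroup (Fin n)} {i j : Fin n} (hij : i ≠ j)
    (hi : Commute u (FreeGroup.of i)) (hj : Commute u (FreeGroup.of j)) : u = 1 := by
  obtain ⟨p, rfl⟩ := mem_zpowers_of_commute_of hi
  obtain ⟨q, hq⟩ := mem_zpowers_of_commute_of hj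
  have hp : 0 = p := by simpa [hij] using congrFun (congrArg abv hq) i
  simp [← hp]

lemma eq_one_of_forall_commute (hn : 2 ≤ n) {u : FreeGroup (Fin n)} (h : ∀ x, Commute u x) :
    u = 1 :=
  eq_one_of_commute_of_commute (i := ⟨0, by omega⟩) (j := ⟨1, by omega⟩) (by simp)
    (h _) (h _)

end Abelianization

/-- for `n ≥ 2`, a type (I) endomorphism `Ψ_{φ,Q,P}` of `ℤ^m × F_n` is
injective iff `φ` is injective and `det Q ≠ 0`. -/
theorem stmt13 (m n : ℕ) (hn : 2 ≤ n) (φ : FreeGroup (Fin n) →* FreeGroup (Fin n))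
    (Q : Matrix (Fin m) (Fin m) ℤ) (P : Matrix (Fin n) (Fin m) ℤ)
    (Ψ : GG m n →* GG m n)
    (hΨ : ∀ (a : Fin m → ℤ) (u : FreeGroup (Fin n)),
      Ψ (Multiplicative.ofAdd a, u) =
        (Multiplicative.ofAdd (a ᵥ* Q + abv u ᵥ* P), φ u)) :
    Function.Injective Ψ ↔ Function.Injective φ ∧ Q.det ≠ 0 := by
  simp only [injective_iff_map_eq_one, Prod.forall]
  constructor
  · intro hker
    refine ⟨fun u hu => eq_one_of_forall_commute hn fun x => ?_, fun hdet => ?_⟩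
    · have hker_comm : Ψ (.ofAdd 0, ⁅u, x⁆) = 1 := by
        rw [hΨ]
        simp [abv_commutatorElement, map_commutatorElement, hu]
      exact commutatorElement_eq_one_iff_commute.1 (congrArg Prod.snd (hker _ _ hker_comm))
    · obtain ⟨a, ha, haQ⟩ := exists_vecMul_eq_zero_iff.2 hdet
      exact ha (congrArg Prod.fst (hker (.ofAdd a) 1 (by rw [hΨ]; simp [haQ])))
  · rintro ⟨hφ, hdet⟩ a u h
    rw [← ofAdd_toAdd a, hΨ, Prod.mk_eq_one] at h
    obtain rfl : u = 1 := hφ u h.2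
    obtain rfl : a.toAdd = 0 := eq_zero_of_vecMul_eq_zero hdet (by simpa using h.1)
    rfl

end Stmt13
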